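/- Let ⟨A, →⟩ be a conditional algebra. Then the inequality a → b ≤ ¬b → ¬a holds for all a, b ∈ A if and only if for all ultrafilters u, v of A and every filter F of A: if D_u(F) ⊆ v, then there exists an ultrafilter w of A with F ⊆ w and D_u(v) ⊆ w. -/
import Mathlib


/-- A filter of a Boolean algebra: contains `⊤`, upward closed, closed under binary meets. -/
def IsBFilter {A : Type*} [BooleanAlgebra A] (F : Set A) : Prop :=
  ⊤ ∈ F ∧ (∀ a b : A, a ∈ F → a ≤ b → b ∈ F) ∧ (∀ a b : A, a ∈ F → b ∈ F → a ⊓ b ∈ F)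

/-- An ultrafilter: a maximal proper filter. -/
def IsBUltra {A : Type*} [BooleanAlgebra A] (u : Set A) : Prop :=
  IsBFilter u ∧ u ≠ Set.univ ∧
    ∀ F : Set A, IsBFilter F → F ≠ Set.univ → u ⊆ F → F = u

/-- `D_X(Y) = {b | ∃ a ∈ Y, a → b ∈ X}`. -/
def Dset {A : Type*} [BooleanAlgebra A] (c : A → A → A) (X Y : Set A) : Set A :=
  {b : A | ∃ a ∈ Y, c a b ∈ X}

section Helpers

variable {A : Type*} [BooleanAlgebra A]

lemma bfilter_ne_univ_iff {F : Set A} (hF : IsBFilter F) : F ≠ Set.univ ↔ ⊥ ∉ F := by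
  constructor
  · intro h hb
    exact h (Set.eq_univ_of_forall fun x => hF.2.1 ⊥ x hb bot_le)
  · intro h hu
    rw [hu] at h
    exact h (Set.mem_univ _)

lemma principal_isBFilter (x : A) : IsBFilter {y : A | x ≤ y} :=
  ⟨le_top, fun a b ha hab => ha.trans hab, fun a b ha hb => le_inf ha hb⟩

lemma cond_mono2 (c : A → A → A) (hC2 : ∀ a b d : A, c a b ⊓ c a d = c a (b ⊓ d))
    {a b b' : A} (h : b ≤ b') : c a b ≤ c a b' := by
  have : c a b = c a b ⊓ c a b' := by rw [hC2, inf_eq_left.mpr h]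
  rw [this]; exact inf_le_right

lemma cond_anti1 (c : A → A → A) (hC3 : ∀ a b d : A, c (a ⊔ b) d ≤ c a d ⊓ c b d)
    {a a' b : A} (h : a' ≤ a) : c a b ≤ c a' b := by
  have : a' ⊔ a = a := sup_eq_right.mpr h
  calc c a b = c (a' ⊔ a) b := by rw [this]
    _ ≤ c a' b ⊓ c a b := hC3 a' a b
    _ ≤ c a' b := inf_le_left

lemma Dset_isBFilter (c : A → A → A) (hC1 : ∀ a : A, c a ⊤ = ⊤)
    (hC2 : ∀ a b d : A, c a b ⊓ c a d = c a (b ⊓ d))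
    (hC3 : ∀ a b d : A, c (a ⊔ b) d ≤ c a d ⊓ c b d)
    {u v : Set A} (hu : IsBFilter u) (hv : IsBFilter v) : IsBFilter (Dset c u v) := by
  refine ⟨⟨⊤, hv.1, by rw [hC1]; exact hu.1⟩, ?_, ?_⟩
  · rintro b b' ⟨a, ha, hab⟩ hbb'
    exact ⟨a, ha, hu.2.1 _ _ hab (cond_mono2 c hC2 hbb')⟩
  · rintro b b' ⟨a, ha, hab⟩ ⟨a', ha', hab'⟩
    refine ⟨a ⊓ a', hv.2.2 _ _ ha ha', ?_⟩
    have h1 : c (a ⊓ a') b ∈ u := hu.2.1 _ _ hab (cond_anti1 c hC3 inf_le_left)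
    have h2 : c (a ⊓ a') b' ∈ u := hu.2.1 _ _ hab' (cond_anti1 c hC3 inf_le_right)
    have := hu.2.2 _ _ h1 h2
    rwa [hC2] at this

/-- Join of two filters. -/
def joinF (F G : Set A) : Set A := {y | ∃ f ∈ F, ∃ g ∈ G, f ⊓ g ≤ y}

lemma joinF_isBFilter {F G : Set A} (hF : IsBFilter F) (hG : IsBFilter G) :
    IsBFilter (joinF F G) := by
  refine ⟨⟨⊤, hF.1, ⊤, hG.1, le_top⟩, ?_, ?_⟩
  · rintro y y' ⟨f, hf, g, hg, hle⟩ hyy'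
    exact ⟨f, hf, g, hg, hle.trans hyy'⟩
  · rintro y y' ⟨f, hf, g, hg, hle⟩ ⟨f', hf', g', hg', hle'⟩
    refine ⟨f ⊓ f', hF.2.2 _ _ hf hf', g ⊓ g', hG.2.2 _ _ hg hg', ?_⟩
    calc (f ⊓ f') ⊓ (g ⊓ g') = (f ⊓ g) ⊓ (f' ⊓ g') := by ac_rfl
      _ ≤ y ⊓ y' := inf_le_inf hle hle'

lemma left_subset_joinF {F G : Set A} (hG : IsBFilter G) : F ⊆ joinF F G :=
  fun y hy => ⟨y, hy, ⊤, hG.1, by simp⟩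

lemma right_subset_joinF {F G : Set A} (hF : IsBFilter F) : G ⊆ joinF F G :=
  fun y hy => ⟨⊤, hF.1, y, hy, by simp⟩

lemma bot_notMem_joinF {F G : Set A} (h : ∀ f ∈ F, ∀ g ∈ G, f ⊓ g ≠ ⊥) :
    ⊥ ∉ joinF F G := by
  rintro ⟨f, hf, g, hg, hle⟩
  exact h f hf g hg (le_bot_iff.mp hle)

/-- Every proper filter extends to an ultrafilter. -/
lemma exists_ultra_extend {F : Set A} (hF : IsBFilter F) (hb : ⊥ ∉ F) :
    ∃ u : Set A, IsBUltra u ∧ F ⊆ u := by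
  have hzorn : ∀ ch ⊆ {G : Set A | IsBFilter G ∧ ⊥ ∉ G}, IsChain (· ⊆ ·) ch →
      ch.Nonempty → ∃ ub ∈ {G : Set A | IsBFilter G ∧ ⊥ ∉ G}, ∀ s ∈ ch, s ⊆ ub := by
    intro ch hchS hchain hne
    obtain ⟨G0, hG0⟩ := hne
    refine ⟨⋃₀ ch, ⟨⟨Set.mem_sUnion.mpr ⟨G0, hG0, (hchS hG0).1.1⟩, ?_, ?_⟩, ?_⟩,
      fun s hs => Set.subset_sUnion_of_mem hs⟩
    · rintro a b ⟨G, hG, haG⟩ hab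
      exact ⟨G, hG, (hchS hG).1.2.1 _ _ haG hab⟩
    · rintro a b ⟨G, hG, haG⟩ ⟨G', hG', hbG'⟩
      rcases hchain.total hG hG' with h | h
      · exact ⟨G', hG', (hchS hG').1.2.2 _ _ (h haG) hbG'⟩
      · exact ⟨G, hG, (hchS hG).1.2.2 _ _ haG (h hbG')⟩
    · rintro ⟨G, hG, hbotG⟩
      exact (hchS hG).2 hbotG
  obtain ⟨m, hFm, hmS, hmax⟩ :=
    zorn_subset_nonempty {G : Set A | IsBFilter G ∧ ⊥ ∉ G} hzorn F ⟨hF, hb⟩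
  refine ⟨m, ⟨hmS.1, (bfilter_ne_univ_iff hmS.1).mpr hmS.2, ?_⟩, hFm⟩
  intro G hG hGne hmG
  exact subset_antisymm (hmax ⟨hG, (bfilter_ne_univ_iff hG).mp hGne⟩ hmG) hmG

end Helpers

/-- `a → b ≤ ¬b → ¬a` holds in a conditional algebra iff on its dual space
`D_u(F) ⊆ v` implies that `D_u(v) ⊆ w` for some ultrafilter `w ⊇ F`. -/
theorem statement19 {A : Type*} [BooleanAlgebra A] (c : A → A → A)
    (hC1 : ∀ a : A, c a ⊤ = ⊤)
    (hC2 : ∀ a b d : A, c a b ⊓ c a d = c a (b ⊓ d))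
    (hC3 : ∀ a b d : A, c (a ⊔ b) d ≤ c a d ⊓ c b d) :
    (∀ a b : A, c a b ≤ c bᶜ aᶜ) ↔
    (∀ u v : Set A, IsBUltra u → IsBUltra v →
      ∀ F : Set A, IsBFilter F → Dset c u F ⊆ v →
        ∃ w : Set A, IsBUltra w ∧ F ⊆ w ∧ Dset c u v ⊆ w) := by
  constructor
  · -- forward direction
    intro hcontra u v hu hv F hF hDF
    have hvbot : ⊥ ∉ v := (bfilter_ne_univ_iff hv.1).mp hv.2.1
    have hD : IsBFilter (Dset c u v) := Dset_isBFilter c hC1 hC2 hC3 hu.1 hv.1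
    -- the join of F and Dset c u v is proper
    have hproper : ⊥ ∉ joinF F (Dset c u v) := by
      apply bot_notMem_joinF
      rintro f hf d ⟨a, hav, had⟩ hfd
      -- d ≤ fᶜ, so c a fᶜ ∈ u, so by contraposition c f aᶜ ∈ u, so aᶜ ∈ D_u(F) ⊆ v
      have hdf : d ≤ fᶜ := le_compl_iff_disjoint_left.mpr (disjoint_iff.mpr hfd)
      have h1 : c a fᶜ ∈ u := hu.1.2.1 _ _ had (cond_mono2 c hC2 hdf)
      have h2 : c f aᶜ ∈ u := by
        have := hcontra a fᶜ
        rw [compl_compl] at this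
        exact hu.1.2.1 _ _ h1 this
      have h3 : aᶜ ∈ v := hDF ⟨f, hf, h2⟩
      have h4 : (⊥ : A) ∈ v := by
        have := hv.1.2.2 _ _ hav h3
        rwa [inf_compl_eq_bot] at this
      exact hvbot h4
    obtain ⟨w, hw, hjw⟩ :=
      exists_ultra_extend (joinF_isBFilter hF hD) hproper
    exact ⟨w, hw, (left_subset_joinF hD).trans hjw, (right_subset_joinF hF).trans hjw⟩
  · -- reverse direction
    intro hdual a b
    by_contra hnle
    -- x = c a b ⊓ (c bᶜ aᶜ)ᶜ ≠ ⊥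
    have hx : c a b ⊓ (c bᶜ aᶜ)ᶜ ≠ ⊥ := by
      intro h
      apply hnle
      rwa [← sdiff_eq, sdiff_eq_bot_iff] at h
    set x := c a b ⊓ (c bᶜ aᶜ)ᶜ with hxdef
    obtain ⟨u, hu, hxu⟩ := exists_ultra_extend (principal_isBFilter x)
      (by simpa using fun h => hx (le_bot_iff.mp h))
    have hcab : c a b ∈ u := hxu (show x ≤ c a b from inf_le_left)
    have hccompl : (c bᶜ aᶜ)ᶜ ∈ u := hxu (show x ≤ (c bᶜ aᶜ)ᶜ from inf_le_right)
    have hubot : ⊥ ∉ u := (bfilter_ne_univ_iff hu.1).mp hu.2.1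
    have hnc : c bᶜ aᶜ ∉ u := fun h => hubot (by
      have := hu.1.2.2 _ _ h hccompl
      rwa [inf_compl_eq_bot] at this)
    -- F = principal filter of bᶜ
    set F : Set A := {y : A | bᶜ ≤ y} with hFdef
    have hF : IsBFilter F := principal_isBFilter bᶜ
    have hD : IsBFilter (Dset c u F) := Dset_isBFilter c hC1 hC2 hC3 hu.1 hF
    -- the join of Dset c u F with ↑a is proper
    have hproper : ⊥ ∉ joinF (Dset c u F) {y : A | a ≤ y} := by
      apply bot_notMem_joinF
      rintro d ⟨y, hy, hyd⟩ g hg hdg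
      have hda : d ⊓ a = ⊥ := le_bot_iff.mp (le_trans (inf_le_inf_left d hg) hdg.le)
      have hdac : d ≤ aᶜ := by
        rwa [← disjoint_iff, ← le_compl_iff_disjoint_right] at hda
      have h1 : c y aᶜ ∈ u := hu.1.2.1 _ _ hyd (cond_mono2 c hC2 hdac)
      have h2 : c bᶜ aᶜ ∈ u := hu.1.2.1 _ _ h1 (cond_anti1 c hC3 hy)
      exact hnc h2
    obtain ⟨v, hv, hjv⟩ :=
      exists_ultra_extend (joinF_isBFilter hD (principal_isBFilter a)) hproper
    have hDuv : Dset c u F ⊆ v := (left_subset_joinF (principal_isBFilter a)).trans hjv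
    have hav : a ∈ v := (right_subset_joinF hD).trans hjv (show a ≤ a from le_refl a)
    obtain ⟨w, hw, hFw, hDw⟩ := hdual u v hu hv F hF hDuv
    have hbw : b ∈ w := hDw ⟨a, hav, hcab⟩
    have hbcw : bᶜ ∈ w := hFw (le_refl bᶜ)
    have : (⊥ : A) ∈ w := by
      have := hw.1.2.2 _ _ hbw hbcw
      rwa [inf_compl_eq_bot] at this
    exact (bfilter_ne_univ_iff hw.1).mp hw.2.1 this
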